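/- arXiv:1110.2942 — 4 statements merged into one kernel-verified Lean document; each statement's English description precedes it below -/
import Mathlib

section
/- Let G be a countable group, h ∈ G, and let F : G → [0,∞) be a function admitting a layer-cake representation F = ∑_{i=1}^p λ_i · 𝟙_{A_i} with λ_i > 0 and finite sets A_1 ⊆ A_2 ⊆ … ⊆ A_p. Then ∑_{g∈G} |F(g) − F(g·h)| = ∑_{i=1}^p λ_i · |A_i △ A_i·h⁻¹|. -/
open scoped symmDiff

/-- Layer-cake identity: if `F = ∑ i, λ i • 𝟙_{A i}` with `λ i > 0` and a monotone chain
of finite sets `A i`, then `∑_g |F(g) − F(g·h)| = ∑ i, λ i · |A i △ A i · h⁻¹|`. -/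
theorem layer_cake_translation_identity
    {G : Type*} [Group G] [Countable G] [DecidableEq G]
    (h : G) (p : ℕ) (lam : Fin p → ℝ) (hlam : ∀ i, 0 < lam i)
    (A : Fin p → Finset G)
    (hmono : ∀ i j : Fin p, i ≤ j → A i ⊆ A j)
    (F : G → ℝ)
    (hF : ∀ g : G, F g = ∑ i, lam i * (if g ∈ A i then (1 : ℝ) else 0)) :
    ∑' g : G, |F g - F (g * h)| =
      ∑ i, lam i * (((A i).image (· * h⁻¹) ∆ A i).card : ℝ) := by
  classical
  set S : Fin p → Finset G := fun i => (A i).image (· * h⁻¹) ∆ A i with hSdef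
  have hmem : ∀ i (g : G), g ∈ S i ↔
      ((g * h ∈ A i ∧ g ∉ A i) ∨ (g ∈ A i ∧ g * h ∉ A i)) := by
    intro i g
    rw [hSdef]
    simp only [Finset.mem_symmDiff, Finset.mem_image]
    constructor
    · rintro (⟨⟨a, ha, rfl⟩, hg⟩ | ⟨hg, hni⟩)
      · left
        refine ⟨?_, hg⟩
        simpa using ha
      · right
        exact ⟨hg, fun hgh => hni ⟨g * h, hgh, by group⟩⟩
    · rintro (⟨h1, h2⟩ | ⟨h1, h2⟩)
      · left; exact ⟨⟨g * h, h1, by group⟩, h2⟩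
      · right
        refine ⟨h1, ?_⟩
        rintro ⟨a, ha, rfl⟩
        exact h2 (by simpa using ha)
  have key : ∀ g : G, |F g - F (g * h)| = ∑ i, lam i * (if g ∈ S i then (1:ℝ) else 0) := by
    intro g
    set d : Fin p → ℝ :=
      fun i => (if g ∈ A i then (1:ℝ) else 0) - (if g * h ∈ A i then 1 else 0) with hd
    have hFdiff : F g - F (g * h) = ∑ i, lam i * d i := by
      rw [hF g, hF (g * h), ← Finset.sum_sub_distrib]
      exact Finset.sum_congr rfl fun i _ => by rw [hd]; ring
    have habsd : ∀ i, |d i| = (if g ∈ S i then (1:ℝ) else 0) := by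
      intro i
      rw [hd]
      by_cases h1 : g ∈ A i <;> by_cases h2 : g * h ∈ A i <;>
        simp [h1, h2, hmem i g]
    rw [hFdiff]
    by_cases hpos : ∀ i, 0 ≤ d i
    · rw [abs_of_nonneg (Finset.sum_nonneg fun i _ => mul_nonneg (hlam i).le (hpos i))]
      refine Finset.sum_congr rfl fun i _ => ?_
      rw [← habsd i, abs_of_nonneg (hpos i)]
    · push_neg at hpos
      obtain ⟨i0, hi0⟩ := hpos
      have hi0' : g ∉ A i0 ∧ g * h ∈ A i0 := by
        rw [hd] at hi0
        by_cases h1 : g ∈ A i0 <;> by_cases h2 : g * h ∈ A i0 <;>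
          simp [h1, h2] at hi0 ⊢ <;> first | exact ⟨h1, h2⟩ | linarith
      have hneg : ∀ i, d i ≤ 0 := by
        intro j
        rw [hd]
        by_cases h1 : g ∈ A j <;> by_cases h2 : g * h ∈ A j <;> simp [h1, h2]
        exfalso
        rcases le_total i0 j with hle | hle
        · exact h2 (hmono i0 j hle hi0'.2)
        · exact hi0'.1 (hmono j i0 hle h1)
      rw [abs_of_nonpos (Finset.sum_nonpos fun i _ =>
        mul_nonpos_of_nonneg_of_nonpos (hlam i).le (hneg i)), ← Finset.sum_neg_distrib]
      refine Finset.sum_congr rfl fun i _ => ?_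
      rw [← habsd i, abs_of_nonpos (hneg i)]; ring
  calc ∑' g : G, |F g - F (g * h)|
      = ∑' g : G, ∑ i, lam i * (if g ∈ S i then (1:ℝ) else 0) := tsum_congr key
    _ = ∑ i, ∑' g : G, lam i * (if g ∈ S i then (1:ℝ) else 0) := by
        refine Summable.tsum_finsetSum fun i _ => ?_
        apply summable_of_ne_finset_zero (s := S i)
        intro g hg; simp [hg]
    _ = ∑ i, lam i * ((S i).card : ℝ) := by
        refine Finset.sum_congr rfl fun i _ => ?_
        rw [tsum_eq_sum (s := S i) (fun g hg => by simp [hg])]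
        have : ∑ g ∈ S i, (lam i * if g ∈ S i then (1:ℝ) else 0) = ∑ _g ∈ S i, lam i :=
          Finset.sum_congr rfl fun g hg => by simp [hg]
        rw [this, Finset.sum_const, nsmul_eq_mul, mul_comm]
end

section
/- If a topological Markov chain Σ_A admits a φ-conformal probability measure μ (with the conformality identity μ(θ(A)) = ∫_A φ⁻¹ dμ for Borel A on which θ is injective) where φ is a potential of medium variation, then the Gurevič pressure satisfies P_G(θ,φ) ≤ 0; that is, for any state a, limsup_n (1/n)·log ∑_{θⁿx = x, x ∈ [a]} Φ_n(x) ≤ 0. -/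
/-!
Iterating conformality along a cylinder `[p₀ … p_{m-1}]` shows that its image under `θᵐ`, which
contains the one-symbol cylinder `[p_m]`, has measure `∫ 1 / Φ_m dμ` over the cylinder; by
bounded distortion this gives `Φ_m(p) μ[p_m] ≤ C_m μ[p₀ … p_{m-1}]`. A point of period `n` in
`[a]` returns to `a` at time `n`, and distinct such points have disjoint length-`n` cylinders, so
`Z_a^n μ[a] ≤ C_n`. Irreducibility and the same estimate give `μ[a] > 0`, hence
`(1/n) log Z_a^n ≤ log C_n^{1/n} - (1/n) log μ[a] → 0`.
-/

open MeasureTheory Filter Set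
open scoped ENNReal

section ChangeOfVariables

variable {X : Type*} [MeasurableSpace X] {μ : Measure X}

-- Unlike `lintegral_withDensity_le_lintegral_mul`, the density `d` need not be measurable.
theorem lintegral_withDensity_le_lintegral_mul' (d g : X → ℝ≥0∞) :
    ∫⁻ x, g x ∂μ.withDensity d ≤ ∫⁻ x, d x * g x ∂μ := by
  have measurable_case : ∀ ⦃h : X → ℝ≥0∞⦄, Measurable h →
      ∫⁻ x, h x ∂μ.withDensity d ≤ ∫⁻ x, d x * h x ∂μ := by
    intro h hh
    refine Measurable.ennreal_induction ?_ ?_ ?_ hh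
    · intro c s hs
      rw [lintegral_indicator_const hs, withDensity_apply _ hs]
      calc c * ∫⁻ x in s, d x ∂μ ≤ ∫⁻ x in s, c * d x ∂μ := lintegral_const_mul_le _ _
        _ = ∫⁻ x, d x * s.indicator (fun _ => c) x ∂μ := by
          rw [← lintegral_indicator hs]
          congr 1 with x
          by_cases hx : x ∈ s <;> simp [hx, mul_comm]
    · intro h₁ h₂ _ hm₁ _ ih₁ ih₂
      rw [Pi.add_def, lintegral_add_left hm₁]
      calc _ ≤ ∫⁻ x, d x * h₁ x ∂μ + ∫⁻ x, d x * h₂ x ∂μ := add_le_add ih₁ ih₂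
        _ ≤ _ := by simp only [mul_add]; exact le_lintegral_add _ _
    · intro h hm hmono ih
      rw [lintegral_iSup hm hmono]
      refine iSup_le fun n => (ih n).trans (lintegral_mono fun x => ?_)
      exact mul_le_mul_right (le_iSup (fun n => h n x) n) _
  rw [← iSup_lintegral_measurable_le_eq_lintegral]
  refine iSup₂_le fun h hm => iSup_le fun hle => (measurable_case hm).trans ?_
  exact lintegral_mono fun x => mul_le_mul_right (hle x) _

def IsConformalMeasure (μ : Measure X) (θ : X → X) (d : X → ℝ≥0∞) : Prop :=
  ∀ S, MeasurableSet S → InjOn θ S → μ (θ '' S) = ∫⁻ x in S, d x ∂μ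

variable {θ : X → X} {d : X → ℝ≥0∞}

theorem IsConformalMeasure.restrict_image_eq_map (hconf : IsConformalMeasure μ θ d)
    (hθ : Measurable θ) {S : Set X} (hS : MeasurableSet S) (hinj : InjOn θ S) :
    μ.restrict (θ '' S) = ((μ.restrict S).withDensity d).map θ := by
  ext T hT
  rw [Measure.restrict_apply hT, Measure.map_apply hθ hT, withDensity_apply _ (hθ hT),
    Measure.restrict_restrict (hθ hT), ← hconf _ ((hθ hT).inter hS) (hinj.mono inter_subset_right),
    inter_comm (θ ⁻¹' T), image_inter_preimage, inter_comm]

theorem IsConformalMeasure.setLIntegral_image_le (hconf : IsConformalMeasure μ θ d)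
    (hθ : Measurable θ) {S : Set X} (hS : MeasurableSet S) (hinj : InjOn θ S) (f : X → ℝ≥0∞) :
    ∫⁻ z in θ '' S, f z ∂μ ≤ ∫⁻ y in S, d y * f (θ y) ∂μ := by
  rw [hconf.restrict_image_eq_map hθ hS hinj]
  exact (lintegral_map_le _ _).trans (lintegral_withDensity_le_lintegral_mul' _ _)

theorem IsConformalMeasure.setLIntegral_iterate_image_le (hconf : IsConformalMeasure μ θ d)
    (hθ : Measurable θ) {S : Set X} (k : ℕ)
    (hS : ∀ j < k, MeasurableSet (θ^[j] '' S) ∧ InjOn θ (θ^[j] '' S)) (f : X → ℝ≥0∞) :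
    ∫⁻ z in θ^[k] '' S, f z ∂μ
      ≤ ∫⁻ y in S, (∏ j ∈ Finset.range k, d (θ^[j] y)) * f (θ^[k] y) ∂μ := by
  induction k generalizing f with
  | zero => simp
  | succ k ih =>
    obtain ⟨hmeas, hinj⟩ := hS k k.lt_succ_self
    calc ∫⁻ z in θ^[k + 1] '' S, f z ∂μ = ∫⁻ z in θ '' (θ^[k] '' S), f z ∂μ := by
          rw [Function.iterate_succ', image_comp]
      _ ≤ ∫⁻ y in θ^[k] '' S, d y * f (θ y) ∂μ := hconf.setLIntegral_image_le hθ hmeas hinj f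
      _ ≤ _ := ih (fun j hj => hS j (hj.trans k.lt_succ_self)) _
      _ = _ := by
          congr 1 with y
          rw [Finset.prod_range_succ, Function.iterate_succ_apply', mul_assoc]

end ChangeOfVariables

def birkhoffProd {X : Type*} (θ : X → X) (φ : X → ℝ) (n : ℕ) (x : X) : ℝ :=
  ∏ k ∈ Finset.range n, φ (θ^[k] x)

theorem birkhoffProd_pos {X : Type*} {θ : X → X} {φ : X → ℝ} (hφ : ∀ x, 0 < φ x) (n : ℕ)
    (x : X) : 0 < birkhoffProd θ φ n x :=
  Finset.prod_pos fun _ _ => hφ _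

abbrev MarkovShift {I : Type*} (A : I → I → Prop) := {x : ℕ → I // ∀ n, A (x n) (x (n + 1))}

namespace MarkovShift

variable {I : Type*} {A : I → I → Prop}

def shift (x : MarkovShift A) : MarkovShift A := ⟨fun n => x.1 (n + 1), fun n => x.2 (n + 1)⟩

def cylinder (w : ℕ → I) (m : ℕ) : Set (MarkovShift A) := Subtype.val ⁻¹' PiNat.cylinder w m

theorem eq_shift {θ : MarkovShift A → MarkovShift A} (hθ : ∀ x n, (θ x).1 n = x.1 (n + 1)) :
    θ = shift :=
  funext fun x => Subtype.ext (funext (hθ x))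

theorem iterate_shift_apply (k : ℕ) (y : MarkovShift A) (j : ℕ) :
    (shift^[k] y).1 j = y.1 (j + k) := by
  induction k generalizing j with
  | zero => rfl
  | succ k ih => rw [Function.iterate_succ_apply', shift, ih, add_right_comm, add_assoc]

theorem injOn_shift {S : Set (MarkovShift A)} (c : I) (hS : ∀ y ∈ S, y.1 0 = c) :
    InjOn shift S := by
  intro y hy y' hy' h
  refine Subtype.ext (funext fun i => ?_)
  cases i with
  | zero => rw [hS y hy, hS y' hy']
  | succ i => exact congrArg (fun z : MarkovShift A => z.1 i) h

theorem exists_mem_cylinder_iterate_shift_eq (p : MarkovShift A) (j : ℕ) (z : MarkovShift A)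
    (hz : z.1 0 = p.1 j) : ∃ y ∈ cylinder p.1 j, shift^[j] y = z := by
  let w : ℕ → I := fun i => if i < j then p.1 i else z.1 (i - j)
  have hw : ∀ i, A (w i) (w (i + 1)) := by
    intro i
    rcases lt_trichotomy (i + 1) j with h | rfl | h
    · rw [show w i = p.1 i from if_pos (by omega), show w (i + 1) = p.1 (i + 1) from if_pos h]
      exact p.2 i
    · rw [show w i = p.1 i from if_pos (by omega), show w (i + 1) = p.1 (i + 1) by simp [w, hz]]
      exact p.2 i
    · rw [show w i = z.1 (i - j) from if_neg (by omega),
        show w (i + 1) = z.1 (i - j + 1) by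
          simp only [w, if_neg (by omega : ¬i + 1 < j), Nat.sub_add_comm (by omega : j ≤ i)]]
      exact z.2 (i - j)
  refine ⟨⟨w, hw⟩, fun i hi => if_pos hi, Subtype.ext (funext fun i => ?_)⟩
  simp [iterate_shift_apply, w]

theorem iterate_shift_image_cylinder (p : MarkovShift A) {j m : ℕ} (hjm : j < m) :
    shift^[j] '' cylinder p.1 m = cylinder (A := A) (fun i => p.1 (i + j)) (m - j) := by
  ext z
  constructor
  · rintro ⟨y, hy, rfl⟩ i hi
    rw [iterate_shift_apply]
    exact hy _ (by omega)
  · intro hz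
    obtain ⟨y, hy, rfl⟩ :=
      exists_mem_cylinder_iterate_shift_eq p j z (by simpa using hz 0 (by omega))
    refine ⟨y, fun i hi => ?_, rfl⟩
    rcases lt_or_ge i j with hij | hij
    · exact hy i hij
    · simpa [iterate_shift_apply, Nat.sub_add_cancel hij] using hz (i - j) (by omega)

theorem eq_of_iterate_shift_eq_self {n : ℕ} (hn : 0 < n) {x y : MarkovShift A}
    (hx : shift^[n] x = x) (hy : shift^[n] y = y) (h : ∀ i < n, x.1 i = y.1 i) : x = y := by
  have periodic : ∀ z : MarkovShift A, shift^[n] z = z → Function.Periodic z.1 n :=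
    fun z hz i => by rw [← iterate_shift_apply, hz]
  refine Subtype.ext (funext fun i => ?_)
  rw [← (periodic x hx).map_mod_nat, ← (periodic y hy).map_mod_nat]
  exact h _ (Nat.mod_lt i hn)

section Measure

variable [MeasurableSpace I]

theorem measurable_shift : Measurable (shift : MarkovShift A → MarkovShift A) :=
  Measurable.subtype_mk <| measurable_pi_iff.mpr fun _ => measurable_subtype_coe.eval

variable [MeasurableSingletonClass I]

theorem measurableSet_cylinder (w : ℕ → I) (m : ℕ) :
    MeasurableSet (cylinder (A := A) w m) := by
  rw [cylinder, PiNat.cylinder_eq_pi]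
  exact (MeasurableSet.pi (Finset.range m).countable_toSet fun i _ =>
    measurableSet_singleton (w i)).preimage measurable_subtype_coe

def HasDistortionBound (φ : MarkovShift A → ℝ) (C : ℕ → ℝ) : Prop :=
  ∀ n x y, (∀ i < n, x.1 i = y.1 i) → birkhoffProd shift φ n x ≤ C n * birkhoffProd shift φ n y

variable {φ : MarkovShift A → ℝ} {μ : Measure (MarkovShift A)} {C : ℕ → ℝ}

theorem measure_iterate_shift_image_cylinder_le {d : MarkovShift A → ℝ≥0∞}
    (hconf : IsConformalMeasure μ shift d) (p : MarkovShift A) (m : ℕ) :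
    μ (shift^[m] '' cylinder p.1 m)
      ≤ ∫⁻ y in cylinder p.1 m, ∏ j ∈ Finset.range m, d (shift^[j] y) ∂μ := by
  have hS : ∀ j < m, MeasurableSet (shift^[j] '' cylinder p.1 m) ∧
      InjOn shift (shift^[j] '' cylinder p.1 m) := fun j hj => by
    rw [iterate_shift_image_cylinder p hj]
    exact ⟨measurableSet_cylinder _ _, injOn_shift (p.1 j) fun y hy => by
      simpa using hy 0 (by omega)⟩
  simpa using hconf.setLIntegral_iterate_image_le measurable_shift m hS 1

theorem ofReal_birkhoffProd_mul_measure_le (hφ : ∀ x, 0 < φ x)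
    (hconf : IsConformalMeasure μ shift fun x => ENNReal.ofReal (1 / φ x))
    (p : MarkovShift A) (m : ℕ) {c : ℝ}
    (hc : ∀ y ∈ cylinder p.1 m, birkhoffProd shift φ m p ≤ c * birkhoffProd shift φ m y) :
    ENNReal.ofReal (birkhoffProd shift φ m p) * μ {z | z.1 0 = p.1 m}
      ≤ ENNReal.ofReal c * μ (cylinder p.1 m) := by
  set Φp := ENNReal.ofReal (birkhoffProd shift φ m p)
  have hcover : {z | z.1 0 = p.1 m} ⊆ shift^[m] '' cylinder p.1 m := fun z hz =>
    exists_mem_cylinder_iterate_shift_eq p m z hz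
  have hpoint : ∀ y ∈ cylinder p.1 m,
      Φp * ∏ j ∈ Finset.range m, ENNReal.ofReal (1 / φ (shift^[j] y)) ≤ ENNReal.ofReal c := by
    intro y hy
    rw [← ENNReal.ofReal_prod_of_nonneg fun j _ => (one_div_pos.2 (hφ _)).le,
      ← ENNReal.ofReal_mul (birkhoffProd_pos hφ m p).le, Finset.prod_div_distrib,
      Finset.prod_const_one, ← div_eq_mul_one_div]
    exact ENNReal.ofReal_le_ofReal ((div_le_iff₀ (birkhoffProd_pos hφ m y)).2 (hc y hy))
  calc Φp * μ {z | z.1 0 = p.1 m}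
      ≤ Φp * ∫⁻ y in cylinder p.1 m,
          ∏ j ∈ Finset.range m, ENNReal.ofReal (1 / φ (shift^[j] y)) ∂μ := by
        gcongr
        exact (measure_mono hcover).trans (measure_iterate_shift_image_cylinder_le hconf p m)
    _ ≤ ∫⁻ y in cylinder p.1 m,
          Φp * ∏ j ∈ Finset.range m, ENNReal.ofReal (1 / φ (shift^[j] y)) ∂μ :=
        lintegral_const_mul_le _ _
    _ ≤ ∫⁻ _ in cylinder p.1 m, ENNReal.ofReal c ∂μ :=
        setLIntegral_mono' (measurableSet_cylinder _ _) hpoint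
    _ = ENNReal.ofReal c * μ (cylinder p.1 m) := setLIntegral_const _ _

theorem measure_coord_eq_pos [Countable I] [IsProbabilityMeasure μ] (hφ : ∀ x, 0 < φ x)
    (hconf : IsConformalMeasure μ shift fun x => ENNReal.ofReal (1 / φ x))
    (hC : HasDistortionBound φ C)
    (hirr : ∀ a b : I, ∃ n > 0, ∃ x : MarkovShift A, x.1 0 = a ∧ x.1 n = b) (a : I) :
    0 < μ {z | z.1 0 = a} := by
  obtain ⟨b, hb⟩ : ∃ b : I, μ {z | z.1 0 = b} ≠ 0 := by
    by_contra! h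
    have hcover : ⋃ b, {z : MarkovShift A | z.1 0 = b} = univ :=
      iUnion_eq_univ_iff.2 fun z => ⟨z.1 0, rfl⟩
    simpa [hcover] using measure_iUnion_null h
  obtain ⟨n, hn, p, hp0, hpn⟩ := hirr a b
  have hest := ofReal_birkhoffProd_mul_measure_le hφ hconf p n
    fun y hy => hC n p y fun i hi => (hy i hi).symm
  have hsub : cylinder (A := A) p.1 n ⊆ {z | z.1 0 = a} := fun y hy => (hy 0 hn).trans hp0
  refine pos_iff_ne_zero.2 fun ha => ?_
  rw [hpn, measure_mono_null hsub ha, mul_zero, nonpos_iff_eq_zero, mul_eq_zero,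
    ENNReal.ofReal_eq_zero] at hest
  exact hest.elim (birkhoffProd_pos hφ n p).not_ge hb

theorem sum_ofReal_birkhoffProd_mul_measure_le [IsProbabilityMeasure μ] (hφ : ∀ x, 0 < φ x)
    (hconf : IsConformalMeasure μ shift fun x => ENNReal.ofReal (1 / φ x))
    (hC : HasDistortionBound φ C) {n : ℕ} (hn : 0 < n) (a : I)
    (F : Finset {x : MarkovShift A // shift^[n] x = x ∧ x.1 0 = a}) :
    ∑ x ∈ F, ENNReal.ofReal (birkhoffProd shift φ n x) * μ {z | z.1 0 = a}
      ≤ ENNReal.ofReal (C n) := by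
  have hdisj : (F : Set {x : MarkovShift A // shift^[n] x = x ∧ x.1 0 = a}).PairwiseDisjoint
      fun x => cylinder (A := A) x.1.1 n := fun x _ y _ hxy =>
    disjoint_left.2 fun z hzx hzy => hxy <| Subtype.ext <|
      eq_of_iterate_shift_eq_self hn x.2.1 y.2.1 fun i hi => (hzx i hi).symm.trans (hzy i hi)
  calc ∑ x ∈ F, ENNReal.ofReal (birkhoffProd shift φ n x) * μ {z | z.1 0 = a}
      ≤ ∑ x ∈ F, ENNReal.ofReal (C n) * μ (cylinder x.1.1 n) := by
        refine Finset.sum_le_sum fun x _ => ?_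
        have hxn : x.1.1 n = a := by
          simpa [x.2.1, x.2.2] using (iterate_shift_apply n x.1 0).symm
        simpa [hxn] using ofReal_birkhoffProd_mul_measure_le hφ hconf x.1 n
          fun y hy => hC n x.1 y fun i hi => (hy i hi).symm
    _ = ENNReal.ofReal (C n) * μ (⋃ x ∈ F, cylinder x.1.1 n) := by
        rw [measure_biUnion_finset hdisj fun x _ => measurableSet_cylinder _ _, Finset.mul_sum]
    _ ≤ ENNReal.ofReal (C n) := mul_le_of_le_one_right' prob_le_one

theorem tsum_birkhoffProd_periodic_le [IsProbabilityMeasure μ] (hφ : ∀ x, 0 < φ x)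
    (hconf : IsConformalMeasure μ shift fun x => ENNReal.ofReal (1 / φ x))
    (hC : HasDistortionBound φ C) {n : ℕ} (hn : 0 < n) (hCn : 0 ≤ C n) {a : I}
    (ha : 0 < μ {z | z.1 0 = a}) :
    ∑' x : {x : MarkovShift A // shift^[n] x = x ∧ x.1 0 = a}, birkhoffProd shift φ n x
      ≤ C n / (μ {z | z.1 0 = a}).toReal := by
  have hpos : ∀ x : {x : MarkovShift A // shift^[n] x = x ∧ x.1 0 = a},
      0 ≤ birkhoffProd shift φ n x := fun x => (birkhoffProd_pos hφ n _).le
  refine Real.tsum_le_of_sum_le hpos fun F => ?_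
  have hsum : ENNReal.ofReal ((∑ x ∈ F, birkhoffProd shift φ n x) * (μ {z | z.1 0 = a}).toReal)
      ≤ ENNReal.ofReal (C n) := by
    rw [ENNReal.ofReal_mul (Finset.sum_nonneg fun x _ => hpos x),
      ENNReal.ofReal_sum_of_nonneg fun x _ => hpos x, ENNReal.ofReal_toReal (measure_ne_top μ _),
      Finset.sum_mul]
    exact sum_ofReal_birkhoffProd_mul_measure_le hφ hconf hC hn a F
  rw [le_div_iff₀ (ENNReal.toReal_pos ha.ne' (measure_ne_top μ _))]
  exact (ENNReal.ofReal_le_ofReal_iff hCn).1 hsum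

end Measure

end MarkovShift

theorem Real.limsup_nonpos_of_eventuallyLE_of_tendsto_zero {ι : Type*} {l : Filter ι} [l.NeBot]
    {u v : ι → ℝ} (huv : u ≤ᶠ[l] v) (hv : Tendsto v l (nhds 0)) : limsup u l ≤ 0 := by
  by_cases hu : l.IsCoboundedUnder (· ≤ ·) u
  · exact (limsup_le_limsup huv hu hv.isBoundedUnder_le).trans_eq hv.limsup_eq
  · -- `u` is not frequently bounded below, so `limsup u l` is the junk value `sInf ∅ = 0`
    exact (Real.sInf_of_not_bddBelow hu).le

theorem Real.log_le_log_of_nonneg_of_one_le {x y : ℝ} (hx : 0 ≤ x) (hxy : x ≤ y) (hy : 1 ≤ y) :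
    Real.log x ≤ Real.log y := by
  rcases hx.eq_or_lt with rfl | hx
  · rw [Real.log_zero]
    exact Real.log_nonneg hy
  · exact Real.log_le_log hx hxy

/-- If a topological Markov chain carries a `φ`-conformal probability measure for a potential
`φ` of medium variation, then the Gurevič pressure is at most `0`. -/
theorem gurevic_pressure_nonpos_of_conformal_measure
    {I : Type*} [Countable I] [MeasurableSpace I] [MeasurableSingletonClass I]
    (A : I → I → Prop)
    (φ : {x : ℕ → I // ∀ n, A (x n) (x (n + 1))} → ℝ)
    (hφpos : ∀ x, 0 < φ x)
    (θ : {x : ℕ → I // ∀ n, A (x n) (x (n + 1))} →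
         {x : ℕ → I // ∀ n, A (x n) (x (n + 1))})
    (hθ : ∀ x n, (θ x).1 n = x.1 (n + 1))
    -- topologically mixing
    (hmix : ∀ a b : I, ∃ N : ℕ, ∀ n ≥ N,
      ∃ x : {x : ℕ → I // ∀ n, A (x n) (x (n + 1))}, x.1 0 = a ∧ x.1 n = b)
    (μ : Measure {x : ℕ → I // ∀ n, A (x n) (x (n + 1))}) [IsProbabilityMeasure μ]
    (hconf : ∀ S : Set {x : ℕ → I // ∀ n, A (x n) (x (n + 1))},
      MeasurableSet S → Set.InjOn θ S →
      μ (θ '' S) = ∫⁻ x in S, ENNReal.ofReal (1 / φ x) ∂μ)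
    (C : ℕ → ℝ) (hC1 : ∀ n, 1 ≤ C n)
    (hCvar : ∀ n : ℕ, ∀ x y : {x : ℕ → I // ∀ n, A (x n) (x (n + 1))},
      (∀ i < n, x.1 i = y.1 i) →
      (∏ k ∈ Finset.range n, φ (θ^[k] x)) ≤ C n * ∏ k ∈ Finset.range n, φ (θ^[k] y))
    (hClim : Tendsto (fun n => (C n) ^ (1 / (n : ℝ))) atTop (nhds 1)) :
    ∀ a : I,
      atTop.limsup (fun n : ℕ => (1 / (n : ℝ)) * Real.log
        (∑' x : {x : {x : ℕ → I // ∀ n, A (x n) (x (n + 1))} // θ^[n] x = x ∧ x.1 0 = a},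
          ∏ k ∈ Finset.range n, φ (θ^[k] x.1))) ≤ 0 := by
  intro a
  obtain rfl := MarkovShift.eq_shift hθ
  have hirr : ∀ a b : I, ∃ n > 0, ∃ x : MarkovShift A, x.1 0 = a ∧ x.1 n = b := fun a b =>
    let ⟨N, hN⟩ := hmix a b
    ⟨N + 1, N.succ_pos, hN (N + 1) N.le_succ⟩
  have ha := MarkovShift.measure_coord_eq_pos hφpos hconf hCvar hirr a
  set r := (μ {z : MarkovShift A | z.1 0 = a}).toReal
  have hr : 0 < r := ENNReal.toReal_pos ha.ne' (measure_ne_top μ _)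
  have hr1 : r ≤ 1 := ENNReal.toReal_le_of_le_ofReal zero_le_one (by simpa using prob_le_one)
  refine Real.limsup_nonpos_of_eventuallyLE_of_tendsto_zero
    (v := fun n : ℕ => Real.log (C n ^ (1 / (n : ℝ))) - 1 / (n : ℝ) * Real.log r) ?_ ?_
  · filter_upwards [eventually_gt_atTop 0] with n hn
    have hC : 0 < C n := one_pos.trans_le (hC1 n)
    have hlog := Real.log_le_log_of_nonneg_of_one_le
      (tsum_nonneg fun _ => (birkhoffProd_pos hφpos n _).le)
      (MarkovShift.tsum_birkhoffProd_periodic_le hφpos hconf hCvar hn hC.le ha)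
      ((one_le_div hr).2 (hr1.trans (hC1 n)))
    calc _ ≤ 1 / (n : ℝ) * Real.log (C n / r) := mul_le_mul_of_nonneg_left hlog (by positivity)
      _ = _ := by rw [Real.log_rpow hC, Real.log_div hC.ne' hr.ne']; ring
  · simpa using (hClim.log one_ne_zero).sub
      (tendsto_one_div_atTop_nhds_zero_nat.mul_const (Real.log r))
end

section
/- (Kesten direction via convolution operators) Let G be a countable amenable group and m a symmetric probability measure on G (m(g) = m(g⁻¹) for all g). Then the operator norm of the convolution operator P : ℓ²(G) → ℓ²(G), Pf(γ) = ∑_{g∈G} f(γg⁻¹)·m(g), equals 1. -/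
/-!
Writing `R_g f = f(· g⁻¹)` for right translation, an isometry of `ℓ²(G)`, the operator is the
norm-convergent average `P = ∑ m(g) R_g`, so `‖P‖ ≤ ∑ m(g) = 1`. Conversely, for the indicator
`F` of `K⁻¹` one has `⟪F, R_g F⟫ = #{y ∈ K | g y ∈ K} ≥ #K - #(gK ∆ K)`, whence
`∑ m(g) #{y ∈ K | g y ∈ K} / #K ≤ ‖P‖`; along a Følner sequence the left side tends to
`∑ m(g) = 1` by dominated convergence.
-/

open Filter
open scoped symmDiff ENNReal Pointwise

section Translation

variable {α β E : Type*} [NormedAddCommGroup E] {p : ℝ≥0∞}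

theorem Memℓp.comp_equiv {f : α → E} (hf : Memℓp f p) (e : β ≃ α) : Memℓp (f ∘ e) p := by
  rcases p.trichotomy with rfl | rfl | hp
  · exact memℓp_zero (hf.finite_dsupport.preimage e.injective.injOn)
  · refine memℓp_infty ?_
    rw [show (fun i => ‖(f ∘ e) i‖) = (fun i => ‖f i‖) ∘ e from rfl, e.surjective.range_comp]
    exact hf.bddAbove
  · exact memℓp_gen ((e.summable_iff (f := fun i => ‖f i‖ ^ p.toReal)).2 (hf.summable hp))

theorem lp.norm_comp_equiv [Fact (1 ≤ p)] (f : lp (fun _ : α => E) p) (e : β ≃ α) :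
    ‖(⟨f ∘ e, (lp.memℓp f).comp_equiv e⟩ : lp (fun _ : β => E) p)‖ = ‖f‖ := by
  rcases p.dichotomy with rfl | hp
  · simp only [lp.norm_eq_ciSup]
    exact e.iSup_comp (g := fun i => ‖f i‖)
  · have hp' : 0 < p.toReal := zero_lt_one.trans_le hp
    rw [lp.norm_eq_tsum_rpow hp', lp.norm_eq_tsum_rpow hp']
    exact congrArg (· ^ _) (e.tsum_eq (fun i => ‖f i‖ ^ p.toReal))

variable (𝕜 : Type*) [NormedField 𝕜] [NormedSpace 𝕜 E] [Fact (1 ≤ p)]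

def lp.compEquiv (e : β ≃ α) : lp (fun _ : α => E) p →ₗᵢ[𝕜] lp (fun _ : β => E) p where
  toFun f := ⟨f ∘ e, (lp.memℓp f).comp_equiv e⟩
  map_add' _ _ := rfl
  map_smul' _ _ := rfl
  norm_map' f := lp.norm_comp_equiv f e

end Translation

section RightTranslate

variable {G : Type*} [Group G] {p : ℝ≥0∞} [Fact (1 ≤ p)] (𝕜 : Type*) [NontriviallyNormedField 𝕜]

noncomputable def lp.rightTranslate (g : G) : lp (fun _ : G => 𝕜) p →L[𝕜] lp (fun _ : G => 𝕜) p :=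
  (lp.compEquiv 𝕜 (Equiv.mulRight g⁻¹)).toContinuousLinearMap

@[simp]
theorem lp.rightTranslate_apply (g : G) (f : lp (fun _ : G => 𝕜) p) (γ : G) :
    lp.rightTranslate 𝕜 g f γ = f (γ * g⁻¹) := rfl

theorem lp.norm_rightTranslate_le (g : G) :
    ‖(lp.rightTranslate 𝕜 g : lp (fun _ : G => 𝕜) p →L[𝕜] _)‖ ≤ 1 :=
  LinearIsometry.norm_toContinuousLinearMap_le _

end RightTranslate

section Convolution

variable {G : Type*} [Group G] {p : ℝ≥0∞} [Fact (1 ≤ p)]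
variable {m : G → ℝ} {P : lp (fun _ : G => ℂ) p →L[ℂ] lp (fun _ : G => ℂ) p}

theorem hasSum_smul_rightTranslate (hm : Summable m)
    (hP : ∀ f γ, P f γ = ∑' g, f (γ * g⁻¹) * (m g : ℂ)) :
    HasSum (fun g => m g • lp.rightTranslate ℂ g) P := by
  have hsum : Summable fun g => m g • (lp.rightTranslate ℂ g : lp (fun _ : G => ℂ) p →L[ℂ] _) :=
    .of_norm_bounded hm.abs fun g => by
      rw [norm_smul, Real.norm_eq_abs]
      exact mul_le_of_le_one_right (abs_nonneg _) (lp.norm_rightTranslate_le ℂ g)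
  convert hsum.hasSum
  ext f γ
  let evalAt : (lp (fun _ : G => ℂ) p →L[ℂ] lp (fun _ : G => ℂ) p) →L[ℂ] ℂ :=
    lp.evalCLM ℂ _ p γ ∘L ContinuousLinearMap.apply ℂ _ f
  calc P f γ = ∑' g, m g • f (γ * g⁻¹) := by simp [hP, mul_comm, Complex.real_smul]
    _ = evalAt (∑' g, m g • lp.rightTranslate ℂ g) := (evalAt.hasSum hsum.hasSum).tsum_eq

theorem norm_le_one_of_hasSum_smul_rightTranslate (hm0 : ∀ g, 0 ≤ m g) (hm1 : HasSum m 1)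
    (hP : HasSum (fun g => m g • lp.rightTranslate ℂ g) P) : ‖P‖ ≤ 1 := by
  rw [← hP.tsum_eq]
  refine tsum_of_norm_bounded hm1 fun g => ?_
  rw [norm_smul, Real.norm_of_nonneg (hm0 g)]
  exact mul_le_of_le_one_right (hm0 g) (lp.norm_rightTranslate_le ℂ g)

end Convolution

section Indicator

open Finset

variable {α 𝕜 : Type*} [DecidableEq α]

noncomputable def lp.finsetIndicator [NormedRing 𝕜] (p : ℝ≥0∞) (s : Finset α) :
    lp (fun _ : α => 𝕜) p :=
  ∑ x ∈ s, lp.single p x 1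

theorem lp.finsetIndicator_apply [NormedRing 𝕜] (p : ℝ≥0∞) (s : Finset α) (a : α) :
    lp.finsetIndicator (𝕜 := 𝕜) p s a = if a ∈ s then 1 else 0 := by
  rw [lp.finsetIndicator, lp.coeFn_sum, Finset.sum_apply]
  exact Finset.sum_pi_single a (fun _ => 1) s

variable [RCLike 𝕜]

theorem lp.norm_finsetIndicator_sq (s : Finset α) :
    ‖(lp.finsetIndicator 2 s : lp (fun _ : α => 𝕜) 2)‖ ^ 2 = #s := by
  have h := lp.norm_sum_single (E := fun _ : α => 𝕜) (p := 2) (by norm_num) (fun _ => 1) s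
  norm_num at h
  exact_mod_cast h

theorem lp.inner_finsetIndicator_left (s : Finset α) (f : lp (fun _ : α => 𝕜) 2) :
    inner 𝕜 (lp.finsetIndicator 2 s) f = ∑ x ∈ s, f x := by
  simp [lp.finsetIndicator, sum_inner, lp.inner_single_left]

end Indicator

section LowerBound

open Finset

variable {G : Type*} [Group G] [DecidableEq G]

theorem inner_finsetIndicator_rightTranslate (s : Finset G) (g : G) :
    inner ℂ (lp.finsetIndicator 2 s) (lp.rightTranslate ℂ g (lp.finsetIndicator 2 s)) =
      #{x ∈ s | x * g⁻¹ ∈ s} := by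
  simp [lp.inner_finsetIndicator_left, lp.finsetIndicator_apply, Finset.sum_boole]

theorem tsum_mul_card_le_norm_mul_card {m : G → ℝ}
    {P : lp (fun _ : G => ℂ) 2 →L[ℂ] lp (fun _ : G => ℂ) 2}
    (hP : HasSum (fun g => m g • lp.rightTranslate ℂ g) P) (s : Finset G) :
    ∑' g, m g * #{x ∈ s | x * g⁻¹ ∈ s} ≤ ‖P‖ * #s := by
  set F : lp (fun _ : G => ℂ) 2 := lp.finsetIndicator 2 s
  let quadraticForm : (lp (fun _ : G => ℂ) 2 →L[ℂ] lp (fun _ : G => ℂ) 2) →L[ℂ] ℂ :=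
    innerSL ℂ F ∘L ContinuousLinearMap.apply ℂ _ F
  have hsum : HasSum (fun g => m g * #{x ∈ s | x * g⁻¹ ∈ s}) (RCLike.re (inner ℂ F (P F))) := by
    convert Complex.reCLM.hasSum (quadraticForm.hasSum hP) using 1
    · ext g
      simp [quadraticForm, F, inner_finsetIndicator_rightTranslate]
    · rfl
  calc ∑' g, m g * #{x ∈ s | x * g⁻¹ ∈ s} = RCLike.re (inner ℂ F (P F)) := hsum.tsum_eq
    _ ≤ ‖F‖ * ‖P F‖ := re_inner_le_norm F (P F)
    _ ≤ ‖F‖ * (‖P‖ * ‖F‖) := by gcongr; exact P.le_opNorm F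
    _ = ‖P‖ * #s := by rw [← lp.norm_finsetIndicator_sq (𝕜 := ℂ) s]; ring

theorem card_filter_mul_inv_mem_inv (K : Finset G) (g : G) :
    #{x ∈ K⁻¹ | x * g⁻¹ ∈ K⁻¹} = #{y ∈ K | g * y ∈ K} := by
  rw [← card_inv {y ∈ K | g * y ∈ K}]
  congr 1
  ext x
  simp [mem_inv', mul_inv_rev]

theorem tsum_mul_card_filter_mul_mem_div_card_le_norm {m : G → ℝ}
    {P : lp (fun _ : G => ℂ) 2 →L[ℂ] lp (fun _ : G => ℂ) 2}
    (hP : HasSum (fun g => m g • lp.rightTranslate ℂ g) P) (K : Finset G) :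
    ∑' g, m g * ((#{y ∈ K | g * y ∈ K} : ℝ) / #K) ≤ ‖P‖ := by
  have h := tsum_mul_card_le_norm_mul_card hP K⁻¹
  simp_rw [card_filter_mul_inv_mem_inv, card_inv] at h
  simp_rw [← mul_div_assoc, tsum_div_const]
  exact div_le_of_le_mul₀ (Nat.cast_nonneg _) (norm_nonneg P) h

end LowerBound

section Folner

open Finset

variable {G : Type*} [Group G] [DecidableEq G]

theorem card_le_card_filter_mul_mem_add_card_symmDiff (K : Finset G) (g : G) :
    #K ≤ #{y ∈ K | g * y ∈ K} + #(K.image (g * ·) ∆ K) := by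
  have hout : #{y ∈ K | g * y ∉ K} ≤ #(K.image (g * ·) ∆ K) := by
    refine card_le_card_of_injOn (g * ·) (fun y hy => ?_) (mul_right_injective g).injOn
    rw [mem_coe, mem_filter] at hy
    rw [mem_coe, mem_symmDiff]
    exact Or.inl ⟨mem_image_of_mem _ hy.1, hy.2⟩
  have := card_filter_add_card_filter_not (s := K) (fun y => g * y ∈ K)
  omega

theorem tendsto_card_filter_mul_mem_div_card {K : ℕ → Finset G} (hKne : ∀ n, (K n).Nonempty)
    {g : G} (hg : Tendsto (fun n => (#((K n).image (g * ·) ∆ K n) : ℝ) / #(K n)) atTop (nhds 0)) :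
    Tendsto (fun n => (#{y ∈ K n | g * y ∈ K n} : ℝ) / #(K n)) atTop (nhds 1) := by
  have hpos : ∀ n, (0 : ℝ) < #(K n) := fun n => by exact_mod_cast (hKne n).card_pos
  refine tendsto_of_tendsto_of_tendsto_of_le_of_le (by simpa only [sub_zero] using hg.const_sub 1)
    tendsto_const_nhds (fun n => ?_) (fun n => ?_)
  · rw [sub_le_iff_le_add, ← add_div, le_div_iff₀ (hpos n), one_mul]
    rw [← Nat.cast_add, Nat.cast_le]
    exact card_le_card_filter_mul_mem_add_card_symmDiff (K n) g
  · rw [div_le_one (hpos n)]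
    exact_mod_cast card_filter_le _ _

end Folner

theorem tendsto_tsum_mul_of_tendsto_one {ι α : Type*} {l : Filter α} {m : ι → ℝ} (hm : Summable m)
    {r : α → ι → ℝ} (hr0 : ∀ a i, 0 ≤ r a i) (hr1 : ∀ a i, r a i ≤ 1)
    (hlim : ∀ i, Tendsto (r · i) l (nhds 1)) :
    Tendsto (fun a => ∑' i, m i * r a i) l (nhds (∑' i, m i)) := by
  refine tendsto_tsum_of_dominated_convergence hm.abs (fun i => ?_) (.of_forall fun a i => ?_)
  · simpa using (hlim i).const_mul (m i)
  · rw [norm_mul, Real.norm_eq_abs, Real.norm_of_nonneg (hr0 a i)]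
    exact mul_le_of_le_one_right (abs_nonneg _) (hr1 a i)

theorem kesten_amenable_norm_eq_one_general
    {G : Type*} [Group G] [DecidableEq G]
    -- Følner sequence: G is amenable
    (K : ℕ → Finset G) (hKne : ∀ n, (K n).Nonempty)
    (hKfolner : ∀ g : G, Tendsto
      (fun n => ((((K n).image (g * ·)) ∆ K n).card : ℝ) / (K n).card) atTop (nhds 0))
    -- symmetric probability measure m
    (m : G → ℝ) (hm0 : ∀ g, 0 ≤ m g) (hmsum : Summable m) (hm1 : ∑' g, m g = 1)
    -- the convolution operator P
    (P : lp (fun _ : G => ℂ) 2 →L[ℂ] lp (fun _ : G => ℂ) 2)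
    (hP : ∀ (f : lp (fun _ : G => ℂ) 2) (γ : G),
      (P f) γ = ∑' g : G, f (γ * g⁻¹) * (m g : ℂ)) :
    ‖P‖ = 1 := by
  have hPsum := hasSum_smul_rightTranslate hmsum hP
  refine le_antisymm
    (norm_le_one_of_hasSum_smul_rightTranslate hm0 (hm1 ▸ hmsum.hasSum) hPsum) ?_
  have hlim := tendsto_tsum_mul_of_tendsto_one hmsum (fun _ _ => by positivity)
    (fun n g => div_le_one_of_le₀ (mod_cast Finset.card_filter_le _ _) (Nat.cast_nonneg _))
    (fun g => tendsto_card_filter_mul_mem_div_card hKne (hKfolner g))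
  rw [hm1] at hlim
  exact le_of_tendsto' hlim fun n => tsum_mul_card_filter_mul_mem_div_card_le_norm hPsum (K n)

/-- Kesten's theorem, amenable direction: for a countable amenable group `G` (amenability
expressed via a Følner sequence) and a symmetric probability measure `m` on `G`, the
right-convolution Markov operator `P f(γ) = ∑_g f(γ g⁻¹) m(g)` on `ℓ²(G)` has operator
norm `1`. -/
theorem kesten_amenable_norm_eq_one
    {G : Type*} [Group G] [Countable G] [DecidableEq G]
    -- Følner sequence: G is amenable
    (K : ℕ → Finset G) (hKne : ∀ n, (K n).Nonempty)
    (hKcover : ∀ g : G, ∃ n, g ∈ K n)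
    (hKfolner : ∀ g : G, Tendsto
      (fun n => ((((K n).image (g * ·)) ∆ K n).card : ℝ) / (K n).card) atTop (nhds 0))
    -- symmetric probability measure m
    (m : G → ℝ) (hm0 : ∀ g, 0 ≤ m g) (hmsum : Summable m) (hm1 : ∑' g, m g = 1)
    (hmsymm : ∀ g : G, m g⁻¹ = m g)
    -- the convolution operator P
    (P : lp (fun _ : G => ℂ) 2 →L[ℂ] lp (fun _ : G => ℂ) 2)
    (hP : ∀ (f : lp (fun _ : G => ℂ) 2) (γ : G),
      (P f) γ = ∑' g : G, f (γ * g⁻¹) * (m g : ℂ)) :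
    ‖P‖ = 1 :=
  kesten_amenable_norm_eq_one_general K hKne hKfolner m hm0 hmsum hm1 P hP
end

section
/- Let (Σ_A, θ) be a topologically mixing topological Markov chain and φ a potential of medium variation (distortion constants C_n with C_n^{1/n} → 1). Then the Gurevič pressure P_G(θ,φ) = limsup_n (1/n)·log Z_a^n, with Z_a^n = ∑_{θⁿx=x, x∈[a]} Φ_n(x), does not depend on the choice of the state a: for any two states a, b with Z_a^n, Z_b^n eventually nonzero, limsup_n (1/n) log Z_a^n = limsup_n (1/n) log Z_b^n. -/
open Filter

lemma real_limsup_eq_toReal (f : ℕ → ℝ) :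
    atTop.limsup f = (atTop.limsup (fun n => (f n : EReal))).toReal := by
  set L := atTop.limsup (fun n => (f n : EReal)) with hL
  have hup : ∀ a : ℝ, (∀ᶠ n in atTop, f n ≤ a) → L ≤ (a : EReal) := by
    intro a h
    refine limsup_le_of_le ?_ (h.mono fun n hn => by exact_mod_cast hn)
    isBoundedDefault
  have hdn : ∀ a : ℝ, L < (a : EReal) → (∀ᶠ n in atTop, f n ≤ a) := by
    intro a h
    have := eventually_lt_of_limsup_lt h (by isBoundedDefault)
    exact this.mono fun n hn => le_of_lt (by exact_mod_cast hn)
  rw [Filter.limsup_eq]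
  rcases eq_or_ne L ⊤ with htop | htop
  · have : {a : ℝ | ∀ᶠ n in atTop, f n ≤ a} = ∅ := by
      ext a; simp only [Set.mem_setOf_eq, Set.mem_empty_iff_false, iff_false]
      intro h
      exact absurd (hup a h) (by simp [htop])
    rw [this, Real.sInf_empty, htop, EReal.toReal_top]
  rcases eq_or_ne L ⊥ with hbot | hbot
  · have huniv : {a : ℝ | ∀ᶠ n in atTop, f n ≤ a} = Set.univ := by
      ext a; simp only [Set.mem_setOf_eq, Set.mem_univ, iff_true]
      exact hdn a (by rw [hbot]; exact bot_lt_iff_ne_bot.2 (by simp))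
    rw [huniv, Real.sInf_of_not_bddBelow, hbot, EReal.toReal_bot]
    rintro ⟨b, hb⟩
    have := hb (Set.mem_univ (b - 1))
    linarith
  lift L to ℝ using ⟨htop, hbot⟩ with x
  rw [EReal.toReal_coe]
  have hmem : ∀ ε : ℝ, 0 < ε → (x + ε) ∈ {a : ℝ | ∀ᶠ n in atTop, f n ≤ a} := by
    intro ε hε
    exact hdn _ (by exact_mod_cast lt_add_of_pos_right x hε)
  have hbdd : BddBelow {a : ℝ | ∀ᶠ n in atTop, f n ≤ a} := by
    refine ⟨x - 1, fun a ha => ?_⟩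
    by_contra hc
    push_neg at hc
    have := hup a ha
    have : (x : EReal) ≤ (a : EReal) := this
    have : x ≤ a := by exact_mod_cast this
    linarith
  refine le_antisymm ?_ ?_
  · refine le_of_forall_pos_le_add fun ε hε => ?_
    exact csInf_le hbdd (hmem ε hε)
  · refine le_csInf ⟨x + 1, hmem 1 one_pos⟩ fun a ha => ?_
    exact_mod_cast hup a ha


lemma limsup_shift_le (u v : ℕ → ℝ) (r : ℕ) (d : ℕ → ℝ)
    (hd : Tendsto d atTop (nhds 0))
    (h : ∀ᶠ n in atTop, u n ≤ d n + ((n + r : ℝ) / n) * v (n + r)) :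
    atTop.limsup (fun n => (u n : EReal)) ≤ atTop.limsup (fun n => (v n : EReal)) := by
  by_contra hc
  push_neg at hc
  obtain ⟨M, hSM, hMu⟩ := EReal.lt_iff_exists_real_btwn.1 hc
  have hv : ∀ᶠ m in atTop, v m < M := by
    have := eventually_lt_of_limsup_lt hSM (by isBoundedDefault)
    exact this.mono fun m hm => by exact_mod_cast hm
  have hvr : ∀ᶠ n : ℕ in atTop, v (n + r) < M :=
    (tendsto_add_atTop_nat r).eventually hv
  set g : ℕ → ℝ := fun n => d n + (M + (r / (n : ℝ)) * max M 0) with hg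
  have key : ∀ᶠ n in atTop, u n ≤ g n := by
    filter_upwards [h, hvr, eventually_ge_atTop 1] with n hn hvn hn1
    have hnpos : (0 : ℝ) < n := by exact_mod_cast hn1
    have hsplit : ((n + r : ℝ) / n) = 1 + r / n := by field_simp
    have h1 : ((n + r : ℝ) / n) * v (n + r) = v (n + r) + (r / n) * v (n + r) := by
      rw [hsplit]; ring
    have h2 : (r / (n:ℝ)) * v (n + r) ≤ (r / (n:ℝ)) * max M 0 := by
      apply mul_le_mul_of_nonneg_left _ (by positivity)
      exact le_trans hvn.le (le_max_left _ _)
    calc u n ≤ d n + ((n + r : ℝ) / n) * v (n + r) := hn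
      _ = d n + (v (n + r) + (r / n) * v (n + r)) := by rw [h1]
      _ ≤ d n + (M + (r / (n:ℝ)) * max M 0) := by
          have := hvn.le
          gcongr
      _ = g n := rfl
  have hgM : Tendsto g atTop (nhds M) := by
    have h0 : Tendsto (fun n : ℕ => (r / (n : ℝ)) * max M 0) atTop (nhds 0) := by
      have : Tendsto (fun n : ℕ => (r : ℝ) / (n : ℝ)) atTop (nhds 0) :=
        tendsto_const_nhds.div_atTop tendsto_natCast_atTop_atTop
      simpa using this.mul_const (max M 0)
    have := hd.add ((tendsto_const_nhds (x := M)).add h0)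
    simpa using this
  have hglim : atTop.limsup (fun n => (g n : EReal)) = (M : EReal) :=
    Tendsto.limsup_eq (by exact (EReal.tendsto_coe).2 hgM)
  have hle : atTop.limsup (fun n => (u n : EReal)) ≤ (M : EReal) := by
    rw [← hglim]
    refine limsup_le_limsup ?_ ?_ ?_
    · exact key.mono fun n hn => by simpa using EReal.coe_le_coe_iff.2 hn
    · isBoundedDefault
    · isBoundedDefault
  exact absurd hMu (not_lt.2 hle)


private def Phi {S : Type*} (φ : S → ℝ) (θ : S → S) (x : S) (n : ℕ) : ℝ :=
  ∏ k ∈ Finset.range n, φ (θ^[k] x)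

private lemma gurevic_construction {I : Type*} (A : I → I → Prop)
    (φ : {x : ℕ → I // ∀ n, A (x n) (x (n + 1))} → ℝ)
    (hφpos : ∀ x, 0 < φ x)
    (θ : {x : ℕ → I // ∀ n, A (x n) (x (n + 1))} →
         {x : ℕ → I // ∀ n, A (x n) (x (n + 1))})
    (hθ : ∀ x n, (θ x).1 n = x.1 (n + 1))
    (hmix : ∀ a b : I, ∃ N : ℕ, ∀ n ≥ N,
      ∃ x : {x : ℕ → I // ∀ n, A (x n) (x (n + 1))}, x.1 0 = a ∧ x.1 n = b)
    (C : ℕ → ℝ) (hC1 : ∀ n, 1 ≤ C n)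
    (hCvar : ∀ n : ℕ, ∀ x y : {x : ℕ → I // ∀ n, A (x n) (x (n + 1))},
      (∀ i < n, x.1 i = y.1 i) →
      (∏ k ∈ Finset.range n, φ (θ^[k] x)) ≤ C n * ∏ k ∈ Finset.range n, φ (θ^[k] y))
    (Z : I → ℕ → ℝ)
    (hZ : ∀ (a : I) (n : ℕ),
      Summable (fun x : {x : {x : ℕ → I // ∀ n, A (x n) (x (n + 1))} //
          θ^[n] x = x ∧ x.1 0 = a} => ∏ k ∈ Finset.range n, φ (θ^[k] x.1)) ∧
      Z a n = ∑' x : {x : {x : ℕ → I // ∀ n, A (x n) (x (n + 1))} //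
          θ^[n] x = x ∧ x.1 0 = a}, ∏ k ∈ Finset.range n, φ (θ^[k] x.1))
    (a b : I) :
    ∃ r : ℕ, ∃ c : ℝ, 0 < c ∧ ∀ n, 1 ≤ n → Z a n ≤ (C n / c) * Z b (n + r) := by
  obtain ⟨N₁, h₁⟩ := hmix b a
  obtain ⟨N₂, h₂⟩ := hmix a b
  have hq1 : 1 ≤ max N₁ 1 := le_max_right _ _
  have hp1 : 1 ≤ max N₂ 1 := le_max_right _ _
  obtain ⟨xba, hxba0, hxbaq⟩ := h₁ (max N₁ 1) (le_max_left _ _)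
  obtain ⟨xab, hxab0, hxabp⟩ := h₂ (max N₂ 1) (le_max_left _ _)
  set q := max N₁ 1 with hqdef
  set p := max N₂ 1 with hpdef
  have hCpos : ∀ k, (0:ℝ) < C k := fun k => lt_of_lt_of_le one_pos (hC1 k)
  have hPhipos : ∀ x k, 0 < Phi φ θ x k := fun x k =>
    Finset.prod_pos fun _ _ => hφpos _
  have hiter : ∀ (x : {x : ℕ → I // ∀ n, A (x n) (x (n + 1))}) (j k : ℕ),
      (θ^[j] x).1 k = x.1 (k + j) := by
    intro x j
    induction j generalizing x with
    | zero => intro k; rfl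
    | succ j ih =>
      intro k
      rw [Function.iterate_succ_apply, ih (θ x) k, hθ]
      rfl
  have hper : ∀ (x : {x : ℕ → I // ∀ n, A (x n) (x (n + 1))}) (n : ℕ),
      θ^[n] x = x → ∀ k, x.1 (k + n) = x.1 k := by
    intro x n hx k
    have h := hiter x n k
    rw [hx] at h
    exact h.symm
  have hmod : ∀ (x : {x : ℕ → I // ∀ n, A (x n) (x (n + 1))}) (n : ℕ), 1 ≤ n →
      θ^[n] x = x → ∀ j, x.1 j = x.1 (j % n) := by
    intro x n hn hx j
    induction j using Nat.strong_induction_on with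
    | _ j ih =>
      by_cases hj : j < n
      · rw [Nat.mod_eq_of_lt hj]
      · have hjn : n ≤ j := le_of_not_gt hj
        calc x.1 j = x.1 ((j - n) + n) := by rw [Nat.sub_add_cancel hjn]
          _ = x.1 (j - n) := hper x n hx _
          _ = x.1 ((j - n) % n) := ih _ (by omega)
          _ = x.1 (j % n) := by rw [← Nat.mod_eq_sub_mod hjn]
  refine ⟨p + q, Phi φ θ xba q / C q * (Phi φ θ xab p / C p),
    mul_pos (div_pos (hPhipos _ _) (hCpos q)) (div_pos (hPhipos _ _) (hCpos p)), ?_⟩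
  intro n hn1
  set c := Phi φ θ xba q / C q * (Phi φ θ xab p / C p) with hcdef
  have hc : 0 < c :=
    mul_pos (div_pos (hPhipos _ _) (hCpos q)) (div_pos (hPhipos _ _) (hCpos p))
  -- the main construction: from a periodic point in [a] build one in [b]
  have main : ∀ x : {x : ℕ → I // ∀ n, A (x n) (x (n + 1))},
      θ^[n] x = x → x.1 0 = a →
      ∃ y : {x : ℕ → I // ∀ n, A (x n) (x (n + 1))},
        θ^[n + (p + q)] y = y ∧ y.1 0 = b ∧
        (∀ i < n, y.1 (q + i) = x.1 i) ∧
        c / C n * Phi φ θ x n ≤ Phi φ θ y (n + (p + q)) := by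
    intro x hxper hx0
    have hxn : x.1 n = a := by
      have := hper x n hxper 0
      rw [Nat.zero_add] at this
      rw [this, hx0]
    rw [show n + (p + q) = q + n + p from by omega]
    set wx : ℕ → I := fun j =>
      if j < q then xba.1 j else if j < q + n then x.1 (j - q)
      else xab.1 (j - (q + n)) with hwx
    have hw1 : ∀ j ≤ q, wx j = xba.1 j := by
      intro j hj
      rcases lt_or_eq_of_le hj with h | h
      · simp only [hwx]; rw [if_pos h]
      · subst h
        simp only [hwx]
        rw [if_neg (lt_irrefl _), if_pos (by omega), Nat.sub_self, hx0, hxbaq]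
    have hw2 : ∀ j, q ≤ j → j ≤ q + n → wx j = x.1 (j - q) := by
      intro j hj1 hj2
      rcases lt_or_eq_of_le hj2 with h | h
      · simp only [hwx]; rw [if_neg (by omega), if_pos h]
      · subst h
        simp only [hwx]
        rw [if_neg (by omega), if_neg (lt_irrefl _)]
        rw [Nat.sub_self, hxab0, show q + n - q = n from by omega, hxn]
    have hw3 : ∀ j, q + n ≤ j → wx j = xab.1 (j - (q + n)) := by
      intro j hj
      simp only [hwx]; rw [if_neg (by omega), if_neg (by omega)]
    have hadj : ∀ j, j + 1 < q + n + p → A (wx j) (wx (j + 1)) := by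
      intro j hj
      rcases (show j + 1 ≤ q ∨ (q ≤ j ∧ j + 1 ≤ q + n) ∨ q + n ≤ j from by omega)
        with h | ⟨ha', hb'⟩ | h
      · rw [hw1 j (by omega), hw1 (j+1) h]; exact xba.2 j
      · rw [hw2 j ha' (by omega), hw2 (j+1) (by omega) hb',
          show j + 1 - q = (j - q) + 1 from by omega]
        exact x.2 (j - q)
      · rw [hw3 j h, hw3 (j+1) (by omega),
          show j + 1 - (q + n) = (j - (q + n)) + 1 from by omega]
        exact xab.2 _
    have hwrap : A (wx (q + n + p - 1)) (wx 0) := by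
      have h1 : wx (q + n + p - 1) = xab.1 (p - 1) := by
        rw [hw3 _ (by omega), show q + n + p - 1 - (q + n) = p - 1 from by omega]
      have h2 : wx 0 = xab.1 p := by
        rw [hw1 0 (by omega), hxba0, ← hxabp]
      rw [h1, h2]
      have h3 := xab.2 (p - 1)
      rwa [show p - 1 + 1 = p from by omega] at h3
    have hadm : ∀ i, A (wx (i % (q + n + p))) (wx ((i + 1) % (q + n + p))) := by
      intro i
      have hj : i % (q + n + p) < q + n + p := Nat.mod_lt _ (by omega)
      have h1 : (i + 1) % (q + n + p) = (i % (q + n + p) + 1) % (q + n + p) := by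
        rw [Nat.add_mod i 1, Nat.mod_eq_of_lt (show 1 < q + n + p from by omega)]
      rcases eq_or_lt_of_le (Nat.succ_le_of_lt hj) with he | hlt
      · have he' : i % (q + n + p) + 1 = q + n + p := he
        rw [h1, he', Nat.mod_self, show i % (q + n + p) = q + n + p - 1 from by omega]
        exact hwrap
      · rw [h1, Nat.mod_eq_of_lt hlt]
        exact hadj _ hlt
    refine ⟨⟨fun i => wx (i % (q + n + p)), hadm⟩, ?_, ?_, ?_, ?_⟩
    · apply Subtype.ext; funext k
      rw [hiter]
      show wx ((k + (q + n + p)) % (q + n + p)) = wx (k % (q + n + p))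
      rw [Nat.add_mod_right]
    · show wx (0 % (q + n + p)) = b
      rw [Nat.zero_mod, hw1 0 (by omega), hxba0]
    · intro i hi
      show wx ((q + i) % (q + n + p)) = x.1 i
      rw [Nat.mod_eq_of_lt (by omega), hw2 _ (by omega) (by omega),
        show q + i - q = i from by omega]
    · -- weight estimate
      set y : {x : ℕ → I // ∀ n, A (x n) (x (n + 1))} :=
        ⟨fun i => wx (i % (q + n + p)), hadm⟩ with hydef
      have hyco : ∀ i, y.1 i = wx (i % (q + n + p)) := fun i => rfl
      have hyiter : ∀ j i, (θ^[j] y).1 i = wx ((i + j) % (q + n + p)) := by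
        intro j i; rw [hiter]
      have esplit : Phi φ θ y (q + n + p) =
          Phi φ θ y q * (Phi φ θ (θ^[q] y) n * Phi φ θ (θ^[q+n] y) p) := by
        show (∏ k ∈ Finset.range (q + n + p), φ (θ^[k] y)) = _
        rw [Finset.prod_range_add (fun k => φ (θ^[k] y)) (q + n) p,
          Finset.prod_range_add (fun k => φ (θ^[k] y)) q n, mul_assoc]
        congr 1
        congr 1
        · exact Finset.prod_congr rfl fun j _ => by
            rw [show q + j = j + q from Nat.add_comm q j, Function.iterate_add_apply]
        · exact Finset.prod_congr rfl fun j _ => by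
            rw [show q + n + j = j + (q + n) from by omega, Function.iterate_add_apply]
      have h1 : Phi φ θ xba q ≤ C q * Phi φ θ y q := by
        apply hCvar q xba y
        intro i hi
        rw [hyco, Nat.mod_eq_of_lt (by omega), hw1 i hi.le]
      have h2 : Phi φ θ x n ≤ C n * Phi φ θ (θ^[q] y) n := by
        apply hCvar n x (θ^[q] y)
        intro i hi
        rw [hyiter, Nat.mod_eq_of_lt (by omega), hw2 _ (by omega) (by omega),
          show i + q - q = i from by omega]
      have h3 : Phi φ θ xab p ≤ C p * Phi φ θ (θ^[q+n] y) p := by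
        apply hCvar p xab (θ^[q+n] y)
        intro i hi
        rw [hyiter, Nat.mod_eq_of_lt (by omega), hw3 _ (by omega),
          show i + (q + n) - (q + n) = i from by omega]
      have e1 : Phi φ θ xba q / C q ≤ Phi φ θ y q :=
        (div_le_iff₀ (hCpos q)).2 (by rw [mul_comm]; exact h1)
      have e2 : Phi φ θ x n / C n ≤ Phi φ θ (θ^[q] y) n :=
        (div_le_iff₀ (hCpos n)).2 (by rw [mul_comm]; exact h2)
      have e3 : Phi φ θ xab p / C p ≤ Phi φ θ (θ^[q+n] y) p :=
        (div_le_iff₀ (hCpos p)).2 (by rw [mul_comm]; exact h3)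
      have p1 := hPhipos y q
      have p2 := hPhipos (θ^[q] y) n
      have p3 := hPhipos (θ^[q+n] y) p
      have pba := hPhipos xba q
      have pab := hPhipos xab p
      have px := hPhipos x n
      calc c / C n * Phi φ θ x n
          = (Phi φ θ xba q / C q) * ((Phi φ θ x n / C n) * (Phi φ θ xab p / C p)) := by
            rw [hcdef]; ring
        _ ≤ Phi φ θ y q * (Phi φ θ (θ^[q] y) n * Phi φ θ (θ^[q+n] y) p) := by
            apply mul_le_mul e1 (mul_le_mul e2 e3 (div_pos pab (hCpos p)).le p2.le)
              (mul_nonneg (div_pos px (hCpos n)).le (div_pos pab (hCpos p)).le)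
              p1.le
        _ = Phi φ θ y (q + n + p) := esplit.symm
  -- use the construction to compare the partition sums
  have hdet : ∀ x1 x2 : {x : ℕ → I // ∀ n, A (x n) (x (n + 1))},
      θ^[n] x1 = x1 → θ^[n] x2 = x2 → (∀ i < n, x1.1 i = x2.1 i) → x1 = x2 := by
    intro x1 x2 hp1' hp2' hagree
    apply Subtype.ext; funext j
    rw [hmod x1 n hn1 hp1' j, hmod x2 n hn1 hp2' j]
    exact hagree _ (Nat.mod_lt _ (by omega))
  choose F hF1 hF2 hF3 hF4 using fun (x : {x : {x : ℕ → I // ∀ n, A (x n) (x (n + 1))} //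
      θ^[n] x = x ∧ x.1 0 = a}) => main x.1 x.2.1 x.2.2
  set G : {x : {x : ℕ → I // ∀ n, A (x n) (x (n + 1))} // θ^[n] x = x ∧ x.1 0 = a} →
      {y : {x : ℕ → I // ∀ n, A (x n) (x (n + 1))} //
        θ^[n + (p + q)] y = y ∧ y.1 0 = b} :=
    fun x => ⟨F x, hF1 x, hF2 x⟩ with hGdef
  have hGinj : Function.Injective G := by
    intro x1 x2 h
    have hFe : F x1 = F x2 := congrArg Subtype.val h
    apply Subtype.ext
    apply hdet x1.1 x2.1 x1.2.1 x2.2.1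
    intro i hi
    rw [← hF3 x1 i hi, ← hF3 x2 i hi, hFe]
  have hsa := (hZ a n).1
  have hsb := (hZ b (n + (p + q))).1
  have hZa := (hZ a n).2
  have hZb := (hZ b (n + (p + q))).2
  have hsum : c / C n * Z a n ≤ Z b (n + (p + q)) := by
    rw [hZa, hZb, ← tsum_mul_left]
    exact Summable.tsum_le_tsum_of_inj G hGinj (fun y _ => (hPhipos _ _).le)
      (fun x => hF4 x) (hsa.mul_left _) hsb
  calc Z a n = C n / c * (c / C n * Z a n) := by
        field_simp [hc.ne', (hCpos n).ne']
    _ ≤ C n / c * Z b (n + (p + q)) :=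
        mul_le_mul_of_nonneg_left hsum (div_pos (hCpos n) hc).le

/-- For a topologically mixing topological Markov chain and a potential of medium
variation, the Gurevič pressure `limsup (1/n) log Z_a^n` does not depend on the choice of
the state `a`. -/
theorem gurevic_pressure_independent_of_state
    {I : Type*} [Countable I] (A : I → I → Prop)
    (φ : {x : ℕ → I // ∀ n, A (x n) (x (n + 1))} → ℝ)
    (hφpos : ∀ x, 0 < φ x)
    (θ : {x : ℕ → I // ∀ n, A (x n) (x (n + 1))} →
         {x : ℕ → I // ∀ n, A (x n) (x (n + 1))})
    (hθ : ∀ x n, (θ x).1 n = x.1 (n + 1))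
    -- topologically mixing
    (hmix : ∀ a b : I, ∃ N : ℕ, ∀ n ≥ N,
      ∃ x : {x : ℕ → I // ∀ n, A (x n) (x (n + 1))}, x.1 0 = a ∧ x.1 n = b)
    -- medium variation
    (C : ℕ → ℝ) (hC1 : ∀ n, 1 ≤ C n)
    (hCvar : ∀ n : ℕ, ∀ x y : {x : ℕ → I // ∀ n, A (x n) (x (n + 1))},
      (∀ i < n, x.1 i = y.1 i) →
      (∏ k ∈ Finset.range n, φ (θ^[k] x)) ≤ C n * ∏ k ∈ Finset.range n, φ (θ^[k] y))
    (hClim : Tendsto (fun n => (C n) ^ (1 / (n : ℝ))) atTop (nhds 1))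
    -- partition functions Z a n, assumed well defined (summable)
    (Z : I → ℕ → ℝ)
    (hZ : ∀ (a : I) (n : ℕ),
      Summable (fun x : {x : {x : ℕ → I // ∀ n, A (x n) (x (n + 1))} //
          θ^[n] x = x ∧ x.1 0 = a} => ∏ k ∈ Finset.range n, φ (θ^[k] x.1)) ∧
      Z a n = ∑' x : {x : {x : ℕ → I // ∀ n, A (x n) (x (n + 1))} //
          θ^[n] x = x ∧ x.1 0 = a}, ∏ k ∈ Finset.range n, φ (θ^[k] x.1)) :
    ∀ a b : I,
      (∃ Na, ∀ n ≥ Na, Z a n ≠ 0) → (∃ Nb, ∀ n ≥ Nb, Z b n ≠ 0) →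
      atTop.limsup (fun n : ℕ => (1 / (n : ℝ)) * Real.log (Z a n)) =
        atTop.limsup (fun n : ℕ => (1 / (n : ℝ)) * Real.log (Z b n)) := by
  have hCpos : ∀ k, (0:ℝ) < C k := fun k => lt_of_lt_of_le one_pos (hC1 k)
  have key : ∀ a b : I, (∃ Na, ∀ n ≥ Na, Z a n ≠ 0) →
      atTop.limsup (fun n : ℕ => ((1 / (n : ℝ) * Real.log (Z a n) : ℝ) : EReal)) ≤
        atTop.limsup (fun n : ℕ => ((1 / (n : ℝ) * Real.log (Z b n) : ℝ) : EReal)) := by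
    rintro a b ⟨Na, hNa⟩
    obtain ⟨r, c, hc, hineq⟩ :=
      gurevic_construction A φ hφpos θ hθ hmix C hC1 hCvar Z hZ a b
    apply limsup_shift_le (fun n : ℕ => 1 / (n : ℝ) * Real.log (Z a n))
      (fun n : ℕ => 1 / (n : ℝ) * Real.log (Z b n)) r
      (fun n : ℕ => 1 / (n : ℝ) * (Real.log (C n) - Real.log c))
    · -- the error term tends to 0
      have t1 : Tendsto (fun n : ℕ => 1 / (n:ℝ) * Real.log (C n)) atTop (nhds 0) := by
        have hcont : ContinuousAt Real.log 1 := Real.continuousAt_log one_ne_zero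
        have h2 := hcont.tendsto.comp hClim
        rw [Real.log_one] at h2
        apply h2.congr'
        filter_upwards [eventually_ge_atTop 1] with n hn
        show Real.log (C n ^ (1 / (n:ℝ))) = 1 / (n:ℝ) * Real.log (C n)
        rw [Real.log_rpow (hCpos n)]
      have t2 : Tendsto (fun n : ℕ => 1 / (n:ℝ) * Real.log c) atTop (nhds 0) := by
        simpa using tendsto_one_div_atTop_nhds_zero_nat.mul_const (Real.log c)
      have h3 := t1.sub t2
      simpa [mul_sub] using h3
    · filter_upwards [eventually_ge_atTop (max Na 1)] with n hn
      have hn1 : 1 ≤ n := le_trans (le_max_right _ _) hn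
      have hnpos : (0:ℝ) < n := by exact_mod_cast hn1
      have hZa_pos : 0 < Z a n := by
        have hne := hNa n (le_trans (le_max_left _ _) hn)
        have hnn : 0 ≤ Z a n := by
          rw [(hZ a n).2]
          exact tsum_nonneg fun x => Finset.prod_nonneg fun k _ => (hφpos _).le
        exact lt_of_le_of_ne hnn (Ne.symm hne)
      have hle := hineq n hn1
      have hkpos : (0:ℝ) < C n / c := div_pos (hCpos n) hc
      have hZb_pos : 0 < Z b (n + r) := by nlinarith
      have hlog : Real.log (Z a n) ≤
          (Real.log (C n) - Real.log c) + Real.log (Z b (n + r)) := by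
        calc Real.log (Z a n) ≤ Real.log (C n / c * Z b (n + r)) :=
              Real.log_le_log hZa_pos hle
          _ = Real.log (C n / c) + Real.log (Z b (n + r)) :=
              Real.log_mul (ne_of_gt hkpos) (ne_of_gt hZb_pos)
          _ = (Real.log (C n) - Real.log c) + Real.log (Z b (n + r)) := by
              rw [Real.log_div (hCpos n).ne' hc.ne']
      have heq : ((n:ℝ) + r) / n * (1 / ((n + r : ℕ):ℝ) * Real.log (Z b (n + r))) =
          1 / (n:ℝ) * Real.log (Z b (n + r)) := by
        have hn0 : (n:ℝ) ≠ 0 := ne_of_gt hnpos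
        have hnr0 : ((n:ℝ) + (r:ℝ)) ≠ 0 := by positivity
        push_cast
        field_simp
      show 1 / (n:ℝ) * Real.log (Z a n) ≤
        1 / (n:ℝ) * (Real.log (C n) - Real.log c) +
          ((n:ℝ) + r) / n * (1 / ((n + r : ℕ):ℝ) * Real.log (Z b (n + r)))
      rw [heq]
      calc 1 / (n:ℝ) * Real.log (Z a n)
          ≤ 1 / (n:ℝ) * ((Real.log (C n) - Real.log c) + Real.log (Z b (n + r))) :=
            mul_le_mul_of_nonneg_left hlog (by positivity)
        _ = 1 / (n:ℝ) * (Real.log (C n) - Real.log c) +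
              1 / (n:ℝ) * Real.log (Z b (n + r)) := by ring
  intro a b ha hb
  rw [real_limsup_eq_toReal, real_limsup_eq_toReal]
  congr 1
  exact le_antisymm (key a b ha) (key b a hb)
end
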